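/- arXiv:1903.02366 — 4 statements merged into one kernel-verified Lean document; each statement's English description precedes it below -/
import Mathlib

section
/- Let F be a field of characteristic zero, R = F[x₁,…,xₙ], and I ⊆ R the ideal generated by x₁,…,xₙ. Let f, g, h ∈ R[y] satisfy f = g·h, where g is monic of degree d₁ ≥ 1 and h is monic of degree d₂ ≥ 1 in y. Assume that the reductions g mod I and h mod I (i.e., the univariate polynomials in F[y] obtained by evaluating every coefficient at x = 0) are coprime in F[y]. Let k ≥ 1, and let g̃, h̃ ∈ R[y] be monic of degrees d₁ and d₂ respectively such that the coefficient of yⁱ in g̃ − g lies in Iᵏ for every i, and the coefficient of yʲ in h̃ − h lies in Iᵏ for every j. Then there exist field constants β_{i,ℓ} ∈ F (0 ≤ i < d₁, 0 ≤ ℓ < d₁+d₂) and γ_{j,ℓ} ∈ F (0 ≤ j < d₂, 0 ≤ ℓ < d₁+d₂) such that for every i < d₁ the coefficient of yⁱ in g minus (the coefficient of yⁱ in g̃ plus Σ_ℓ β_{i,ℓ}·c_ℓ) lies in I^{k+1}, and for every j < d₂ the coefficient of yʲ in h minus (the coefficient of yʲ in h̃ plus Σ_ℓ γ_{j,ℓ}·c_ℓ)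 lies in I^{k+1}, where c_ℓ ∈ R denotes the coefficient of y^ℓ in g̃·h̃ − f. -/
/-!
Write `g' = g + δg`, `h' = h + δh` with `deg δg < d₁`, `deg δh < d₂` and coefficients in `Iᵏ`.
Since `k ≥ 1`, modulo `I^{k+1}` the error `g' h' - g h` agrees coefficientwise with
`g₀ δh + h₀ δg`, where `g₀, h₀` are the reductions of `g, h` mod `I`. As `g₀, h₀` are coprime,
their Sylvester matrix `S` over `F` is invertible, and `S` sends the coefficient vector of
`(δg, δh)` to that of `g₀ δh + h₀ δg`. Since `S⁻¹` has entries in `F`, the coefficients of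
`δg, δh` are `F`-linear combinations of those of `g₀ δh + h₀ δg`, hence, modulo `I^{k+1}`, of
those of the error; `β, γ` are minus the corresponding rows of `S⁻¹`.
-/

open Polynomial Matrix

theorem Polynomial.Monic.degree_sub_lt_of_natDegree_eq {R : Type*} [Ring R] {p q : R[X]}
    (hp : p.Monic) (hq : q.Monic) (h : p.natDegree = q.natDegree) :
    (p - q).degree < p.natDegree := by
  nontriviality R
  rw [← degree_eq_natDegree hp.ne_zero]
  refine degree_sub_lt_left ?_ hp.ne_zero (by rw [hp.leadingCoeff, hq.leadingCoeff])
  rw [degree_eq_natDegree hp.ne_zero, degree_eq_natDegree hq.ne_zero, h]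

namespace Polynomial

theorem sylvester_mulVec_append_coeff {R : Type*} [CommRing R] {m n : ℕ} {f g : R[X]}
    (hf : f.natDegree ≤ m) (hg : g.natDegree ≤ n) {p q : R[X]}
    (hp : p.degree < m) (hq : q.degree < n) :
    sylvester f g m n *ᵥ Fin.append (fun i : Fin m ↦ p.coeff i) (fun j : Fin n ↦ q.coeff j) =
      fun ℓ : Fin (m + n) ↦ (f * q + g * p).coeff ℓ := by
  let pq : R[X]_m × R[X]_n := (⟨p, mem_degreeLT.2 hp⟩, ⟨q, mem_degreeLT.2 hq⟩)
  have hrepr : (((degreeLT.basis R m).prod (degreeLT.basis R n)).reindex finSumFinEquiv).repr pq =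
      Fin.append (fun i : Fin m ↦ p.coeff i) (fun j : Fin n ↦ q.coeff j) := by
    ext ℓ
    induction ℓ using Fin.addCases <;> simp [pq]
  rw [← hrepr, ← toMatrix_sylvesterMap' f g hf hg, LinearMap.toMatrix_mulVec_repr]
  rfl

theorem append_coeff_eq_inv_sylvester_mulVec {K A : Type*} [Field K] [CommRing A] (φ : K →+* A)
    {f g : K[X]} (hfg : IsCoprime f g) {m n : ℕ} (hf : f.natDegree = m) (hg : g.natDegree = n)
    {p q : A[X]} (hp : p.degree < m) (hq : q.degree < n) :
    Fin.append (fun i : Fin m ↦ p.coeff i) (fun j : Fin n ↦ q.coeff j) =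
      φ.mapMatrix (sylvester f g m n)⁻¹ *ᵥ
        fun ℓ : Fin (m + n) ↦ (f.map φ * q + g.map φ * p).coeff ℓ := by
  subst hf hg
  have hdet : IsUnit (sylvester f g f.natDegree g.natDegree).det :=
    (resultant_ne_zero f g hfg).isUnit
  rw [← sylvester_mulVec_append_coeff natDegree_map_le natDegree_map_le hp hq, sylvester_map_map,
    mulVec_mulVec, ← RingHom.map_mul, nonsing_inv_mul _ hdet, map_one, one_mulVec]

end Polynomial

theorem MvPolynomial.sub_C_constantCoeff_mem_idealOfVars {σ R : Type*} [CommRing R]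
    (p : MvPolynomial σ R) : p - C (constantCoeff p) ∈ idealOfVars σ R := by
  rw [← pow_one (idealOfVars σ R), mem_pow_idealOfVars_iff']
  intro x hx
  obtain rfl : x = 0 := by simpa [Finsupp.degree_eq_zero_iff] using hx
  simp [← constantCoeff_eq]

theorem mul_sub_mul_sub_linearization_mem_pow_succ {S : Type*} [CommRing S] {J : Ideal S}
    {k : ℕ} (hk : 1 ≤ k) {g h g₀ h₀ g' h' : S} (hg₀ : g - g₀ ∈ J) (hh₀ : h - h₀ ∈ J)
    (hg' : g' - g ∈ J ^ k) (hh' : h' - h ∈ J ^ k) :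
    g' * h' - g * h - (g₀ * (h' - h) + h₀ * (g' - g)) ∈ J ^ (k + 1) := by
  have hsq : J ^ k * J ^ k ≤ J ^ (k + 1) := by
    rw [← pow_add]; exact Ideal.pow_le_pow_right (by omega)
  have key : g' * h' - g * h - (g₀ * (h' - h) + h₀ * (g' - g)) =
      (h - h₀) * (g' - g) + (g - g₀) * (h' - h) + (g' - g) * (h' - h) := by ring
  rw [key, pow_succ']
  exact add_mem (add_mem (Ideal.mul_mem_mul hh₀ hg') (Ideal.mul_mem_mul hg₀ hh'))
    (pow_succ' J k ▸ hsq (Ideal.mul_mem_mul hg' hh'))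

theorem Polynomial.coeff_mul_sub_mul_sub_linearization_mem_pow_succ {S : Type*} [CommRing S]
    {I : Ideal S} {k : ℕ} (hk : 1 ≤ k) {g h g₀ h₀ g' h' : S[X]}
    (hg₀ : ∀ m, (g - g₀).coeff m ∈ I) (hh₀ : ∀ m, (h - h₀).coeff m ∈ I)
    (hg' : ∀ m, (g' - g).coeff m ∈ I ^ k) (hh' : ∀ m, (h' - h).coeff m ∈ I ^ k) (m : ℕ) :
    (g' * h' - g * h - (g₀ * (h' - h) + h₀ * (g' - g))).coeff m ∈ I ^ (k + 1) := by
  have hpow {p : S[X]} (hp : ∀ m, p.coeff m ∈ I ^ k) : p ∈ I.map C ^ k := by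
    rw [← Ideal.map_pow]; exact Ideal.mem_map_C_iff.2 hp
  have := mul_sub_mul_sub_linearization_mem_pow_succ hk (Ideal.mem_map_C_iff.2 hg₀)
    (Ideal.mem_map_C_iff.2 hh₀) (hpow hg') (hpow hh')
  rw [← Ideal.map_pow, Ideal.mem_map_C_iff] at this
  exact this m

theorem sub_add_sum_neg_mul_mem {R ι : Type*} [CommRing R] [Fintype ι] {J : Ideal R}
    {a a' : R} {c e t : ι → R} (ha : a' - a = ∑ ℓ, c ℓ * t ℓ) (he : ∀ ℓ, e ℓ - t ℓ ∈ J) :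
    a - (a' + ∑ ℓ, -c ℓ * e ℓ) ∈ J := by
  have key : a - (a' + ∑ ℓ, -c ℓ * e ℓ) = ∑ ℓ, c ℓ * (e ℓ - t ℓ) := by
    simp only [mul_sub, Finset.sum_sub_distrib, neg_mul, Finset.sum_neg_distrib, ← ha]
    ring
  rw [key]
  exact J.sum_mem fun ℓ _ ↦ J.mul_mem_left _ (he ℓ)

theorem stmt_4_general {F : Type*} [Field F] {n : ℕ} (k d₁ d₂ : ℕ)
    (hk : 1 ≤ k)
    (f g h g' h' : Polynomial (MvPolynomial (Fin n) F))
    (hf : f = g * h)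
    (hg : g.Monic) (hgdeg : g.natDegree = d₁)
    (hh : h.Monic) (hhdeg : h.natDegree = d₂)
    (hcop : IsCoprime
      (g.map (MvPolynomial.eval (fun _ : Fin n => (0 : F))))
      (h.map (MvPolynomial.eval (fun _ : Fin n => (0 : F)))))
    (hg' : g'.Monic) (hg'deg : g'.natDegree = d₁)
    (hh' : h'.Monic) (hh'deg : h'.natDegree = d₂)
    (hgk : ∀ i : ℕ, (g' - g).coeff i ∈
      (Ideal.span (Set.range (MvPolynomial.X : Fin n → MvPolynomial (Fin n) F))) ^ k)
    (hhk : ∀ j : ℕ, (h' - h).coeff j ∈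
      (Ideal.span (Set.range (MvPolynomial.X : Fin n → MvPolynomial (Fin n) F))) ^ k) :
    ∃ (β : Fin d₁ → Fin (d₁ + d₂) → F) (γ : Fin d₂ → Fin (d₁ + d₂) → F),
      (∀ i : Fin d₁,
        g.coeff i - (g'.coeff i + ∑ ℓ : Fin (d₁ + d₂),
            MvPolynomial.C (β i ℓ) * (g' * h' - f).coeff ℓ) ∈
          (Ideal.span (Set.range (MvPolynomial.X : Fin n → MvPolynomial (Fin n) F))) ^ (k + 1)) ∧
      (∀ j : Fin d₂,
        h.coeff j - (h'.coeff j + ∑ ℓ : Fin (d₁ + d₂),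
            MvPolynomial.C (γ j ℓ) * (g' * h' - f).coeff ℓ) ∈
          (Ideal.span (Set.range (MvPolynomial.X : Fin n → MvPolynomial (Fin n) F))) ^ (k + 1)) := by
  set I := MvPolynomial.idealOfVars (Fin n) F
  set φ := MvPolynomial.eval (fun _ : Fin n ↦ (0 : F))
  set N := (sylvester (g.map φ) (h.map φ) d₁ d₂)⁻¹
  have hred (p : Polynomial (MvPolynomial (Fin n) F)) (m : ℕ) :
      (p - (p.map φ).map MvPolynomial.C).coeff m ∈ I := by
    simpa [φ, MvPolynomial.eval_zero'] using
      MvPolynomial.sub_C_constantCoeff_mem_idealOfVars (p.coeff m)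
  have hlin (ℓ : ℕ) := coeff_mul_sub_mul_sub_linearization_mem_pow_succ hk (hred g) (hred h)
    hgk hhk ℓ
  have hrec := append_coeff_eq_inv_sylvester_mulVec MvPolynomial.C hcop
    ((hg.natDegree_map φ).trans hgdeg) ((hh.natDegree_map φ).trans hhdeg)
    (hg'deg ▸ hg'.degree_sub_lt_of_natDegree_eq hg (hg'deg.trans hgdeg.symm))
    (hh'deg ▸ hh'.degree_sub_lt_of_natDegree_eq hh (hh'deg.trans hhdeg.symm))
  refine ⟨fun i ℓ ↦ -N (Fin.castAdd d₂ i) ℓ, fun j ℓ ↦ -N (Fin.natAdd d₁ j) ℓ, fun i ↦ ?_,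
    fun j ↦ ?_⟩
  · simp only [map_neg]
    refine sub_add_sum_neg_mul_mem ?_ fun ℓ ↦ by simpa only [coeff_sub, hf] using hlin ℓ
    simpa [mulVec, dotProduct, coeff_sub] using congrFun hrec (Fin.castAdd d₂ i)
  · simp only [map_neg]
    refine sub_add_sum_neg_mul_mem ?_ fun ℓ ↦ by simpa only [coeff_sub, hf] using hlin ℓ
    simpa [mulVec, dotProduct, coeff_sub] using congrFun hrec (Fin.natAdd d₁ j)

/-- One step of the multivariate Newton iteration: if `f = g·h` with `g, h ∈ R[y]` monic of
degrees `d₁, d₂ ≥ 1` over `R = F[x₁,…,xₙ]`, whose reductions mod `I = ⟨x₁,…,xₙ⟩` are coprime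
in `F[y]`, and `g̃, h̃` are monic approximations of `g, h` whose coefficients agree with those
of `g, h` modulo `Iᵏ`, then there are field constants `β, γ` such that adding the corresponding
linear combinations of the coefficients `c_ℓ` of `g̃·h̃ − f` to the coefficients of `g̃, h̃`
yields approximations of the coefficients of `g, h` modulo `I^{k+1}`. -/
theorem stmt_4 {F : Type*} [Field F] [CharZero F] {n : ℕ} (k d₁ d₂ : ℕ)
    (hk : 1 ≤ k) (hd₁ : 1 ≤ d₁) (hd₂ : 1 ≤ d₂)
    (f g h g' h' : Polynomial (MvPolynomial (Fin n) F))
    (hf : f = g * h)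
    (hg : g.Monic) (hgdeg : g.natDegree = d₁)
    (hh : h.Monic) (hhdeg : h.natDegree = d₂)
    (hcop : IsCoprime
      (g.map (MvPolynomial.eval (fun _ : Fin n => (0 : F))))
      (h.map (MvPolynomial.eval (fun _ : Fin n => (0 : F)))))
    (hg' : g'.Monic) (hg'deg : g'.natDegree = d₁)
    (hh' : h'.Monic) (hh'deg : h'.natDegree = d₂)
    (hgk : ∀ i : ℕ, (g' - g).coeff i ∈
      (Ideal.span (Set.range (MvPolynomial.X : Fin n → MvPolynomial (Fin n) F))) ^ k)
    (hhk : ∀ j : ℕ, (h' - h).coeff j ∈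
      (Ideal.span (Set.range (MvPolynomial.X : Fin n → MvPolynomial (Fin n) F))) ^ k) :
    ∃ (β : Fin d₁ → Fin (d₁ + d₂) → F) (γ : Fin d₂ → Fin (d₁ + d₂) → F),
      (∀ i : Fin d₁,
        g.coeff i - (g'.coeff i + ∑ ℓ : Fin (d₁ + d₂),
            MvPolynomial.C (β i ℓ) * (g' * h' - f).coeff ℓ) ∈
          (Ideal.span (Set.range (MvPolynomial.X : Fin n → MvPolynomial (Fin n) F))) ^ (k + 1)) ∧
      (∀ j : Fin d₂,
        h.coeff j - (h'.coeff j + ∑ ℓ : Fin (d₁ + d₂),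
            MvPolynomial.C (γ j ℓ) * (g' * h' - f).coeff ℓ) ∈
          (Ideal.span (Set.range (MvPolynomial.X : Fin n → MvPolynomial (Fin n) F))) ^ (k + 1)) :=
  stmt_4_general k d₁ d₂ hk f g h g' h' hf hg hgdeg hh hhdeg hcop hg' hg'deg hh' hh'deg hgk hhk
end

section
/- Let F be a field of characteristic zero, R = F[x₁,…,xₙ], and I ⊆ R the ideal generated by x₁,…,xₙ. Let f, g, h ∈ R[y] satisfy f = g·h, where g is monic of degree d₁ ≥ 1 and h is monic of degree d₂ ≥ 1 in y, and assume the reductions g mod I and h mod I are coprime in F[y]. Let k ≥ 1 and let g̃, h̃ ∈ R[y] be monic of degrees d₁, d₂ whose coefficients agree with those of g, h modulo Iᵏ. Suppose (p₀,…,p_{d₁−1}, q₀,…,q_{d₂−1}) and (p′₀,…,p′_{d₁−1}, q′₀,…,q′_{d₂−1}) are tuples of elements of Iᵏ such that, writing g̃ᵖ = g̃ + Σᵢ pᵢyⁱ and h̃ᵠ = h̃ + Σⱼ qⱼyʲ (and similarly for the primed tuples), every coefficient of g̃ᵖ·h̃ᵠ − f lies in I^{k+1} and every coefficient of g̃ᵖ′·h̃ᵠ′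 − f lies in I^{k+1}. Then pᵢ − p′ᵢ ∈ I^{k+1} for every i and qⱼ − q′ⱼ ∈ I^{k+1} for every j. -/
open Polynomial


lemma aux_coeff_sum {R : Type*} [CommRing R] (d : ℕ) (a : Fin d → R) (m : ℕ) :
    (∑ i : Fin d, Polynomial.C (a i) * Polynomial.X ^ (i : ℕ)).coeff m =
      if h : m < d then a ⟨m, h⟩ else 0 := by
  rw [Polynomial.finset_sum_coeff]
  simp_rw [Polynomial.coeff_C_mul, Polynomial.coeff_X_pow, mul_ite, mul_one, mul_zero]
  split_ifs with h
  · rw [Finset.sum_eq_single (⟨m, h⟩ : Fin d)]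
    · simp
    · intro i _ hi
      simp only [ite_eq_right_iff]
      intro he
      exact absurd (Fin.ext he.symm) hi
    · simp
  · refine Finset.sum_eq_zero fun i _ => ?_
    simp only [ite_eq_right_iff]
    intro he
    exact absurd (he ▸ i.isLt) h

lemma aux_deg {R : Type*} [CommRing R] (d : ℕ) (a : Fin d → R) (hd : 1 ≤ d) :
    (∑ i : Fin d, Polynomial.C (a i) * Polynomial.X ^ (i : ℕ)).degree < ((d : ℕ) : WithBot ℕ) := by
  rw [Polynomial.degree_lt_iff_coeff_zero]
  intro m hm
  rw [aux_coeff_sum]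
  simp [Nat.not_lt.mpr hm]

lemma aux_key {A : Type*} [CommRing A] {G H u v : A[X]} (hG : G.Monic)
    (hcop : IsCoprime G H) (heq : G * v + H * u = 0)
    (hdeg : u.degree < ((G.natDegree : ℕ) : WithBot ℕ)) : u = 0 := by
  have hdvd : G ∣ u := hcop.dvd_of_dvd_mul_left ⟨-v, by linear_combination heq⟩
  obtain ⟨c, rfl⟩ := hdvd
  by_cases hc : c = 0
  · simp [hc]
  · exfalso
    have h2 : G * c ≠ 0 := fun h0 => hc (by simpa using hG.mul_right_eq_zero_iff.mp h0)
    have h1 : (G * c).natDegree = G.natDegree + c.natDegree := hG.natDegree_mul' hc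
    have h3 : (G * c).natDegree < G.natDegree :=
      (Polynomial.natDegree_lt_iff_degree_lt h2).mpr hdeg
    omega

set_option maxHeartbeats 1000000 in
lemma aux_main {R F : Type*} [CommRing R] [CommRing F]
    (I : Ideal R) (k d₁ d₂ : ℕ) (hk : 1 ≤ k) (hd₁ : 1 ≤ d₁) (hd₂ : 1 ≤ d₂)
    (ev : R →+* F) (sec : F →+* R) (hsec : ∀ c, ev (sec c) = c)
    (hmemI : ∀ r, r ∈ I ↔ ev r = 0)
    (f g h g' h' : Polynomial R)
    (hg : g.Monic) (hgdeg : g.natDegree = d₁)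
    (hh : h.Monic) (hhdeg : h.natDegree = d₂)
    (hcop : IsCoprime (g.map ev) (h.map ev))
    (hgk : ∀ i : ℕ, (g' - g).coeff i ∈ I ^ k)
    (hhk : ∀ j : ℕ, (h' - h).coeff j ∈ I ^ k)
    (p p' : Fin d₁ → R) (q q' : Fin d₂ → R)
    (hp : ∀ i, p i ∈ I ^ k) (hp' : ∀ i, p' i ∈ I ^ k)
    (hq : ∀ j, q j ∈ I ^ k) (hq' : ∀ j, q' j ∈ I ^ k)
    (hsol : ∀ m : ℕ,
      (((g' + ∑ i : Fin d₁, Polynomial.C (p i) * Polynomial.X ^ (i : ℕ)) *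
          (h' + ∑ j : Fin d₂, Polynomial.C (q j) * Polynomial.X ^ (j : ℕ)) - f).coeff m)
        ∈ I ^ (k + 1))
    (hsol' : ∀ m : ℕ,
      (((g' + ∑ i : Fin d₁, Polynomial.C (p' i) * Polynomial.X ^ (i : ℕ)) *
          (h' + ∑ j : Fin d₂, Polynomial.C (q' j) * Polynomial.X ^ (j : ℕ)) - f).coeff m)
        ∈ I ^ (k + 1)) :
    (∀ i : Fin d₁, p i - p' i ∈ I ^ (k + 1)) ∧
    (∀ j : Fin d₂, q j - q' j ∈ I ^ (k + 1)) := by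
  classical
  by_cases htop : I ^ (k + 1) = ⊤
  · exact ⟨fun i => htop ▸ Submodule.mem_top, fun j => htop ▸ Submodule.mem_top⟩
  haveI : Nontrivial (R ⧸ I ^ (k + 1)) := Ideal.Quotient.nontrivial_iff.mpr htop
  set mk : R →+* R ⧸ I ^ (k + 1) := Ideal.Quotient.mk (I ^ (k + 1)) with hmkdef
  have hzero : ∀ u : Polynomial R, (∀ m, u.coeff m ∈ I ^ (k + 1)) → u.map mk = 0 := by
    intro u hu
    ext m
    rw [Polynomial.coeff_map, Polynomial.coeff_zero, hmkdef]
    exact (Ideal.Quotient.eq_zero_iff_mem).mpr (hu m)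
  have hbot : Ideal.map mk (I ^ (k + 1)) = ⊥ := Ideal.map_quotient_self _
  have hK : ∀ u v : Polynomial (R ⧸ I ^ (k + 1)),
      (∀ m, u.coeff m ∈ (I ^ k).map mk) → (∀ m, v.coeff m ∈ (I ^ k).map mk) → u * v = 0 := by
    intro u v hu hv
    have hKK : (I ^ k).map mk * (I ^ k).map mk = ⊥ := by
      rw [← Ideal.map_mul, ← pow_add]
      refine le_bot_iff.mp ?_
      calc Ideal.map mk (I ^ (k + k)) ≤ Ideal.map mk (I ^ (k + 1)) :=
            Ideal.map_mono (Ideal.pow_le_pow_right (by omega))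
        _ = ⊥ := hbot
    ext m
    rw [Polynomial.coeff_mul, Polynomial.coeff_zero]
    refine Finset.sum_eq_zero fun x _ => ?_
    have hmem : u.coeff x.1 * v.coeff x.2 ∈ (I ^ k).map mk * (I ^ k).map mk :=
      Ideal.mul_mem_mul (hu x.1) (hv x.2)
    rwa [hKK, Ideal.mem_bot] at hmem
  have hmapK : ∀ u : Polynomial R, (∀ m, u.coeff m ∈ I ^ k) →
      ∀ m, (u.map mk).coeff m ∈ (I ^ k).map mk := by
    intro u hu m
    rw [Polynomial.coeff_map]
    exact Ideal.mem_map_of_mem _ (hu m)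
  -- coefficients of the correction polynomials lie in I^k
  have hPd : ∀ m, ((∑ i : Fin d₁, Polynomial.C (p i) * Polynomial.X ^ (i : ℕ)).coeff m) ∈ I ^ k := by
    intro m; rw [aux_coeff_sum]; split_ifs; exacts [hp _, zero_mem _]
  have hPd' : ∀ m, ((∑ i : Fin d₁, Polynomial.C (p' i) * Polynomial.X ^ (i : ℕ)).coeff m) ∈ I ^ k := by
    intro m; rw [aux_coeff_sum]; split_ifs; exacts [hp' _, zero_mem _]
  have hQd : ∀ m, ((∑ j : Fin d₂, Polynomial.C (q j) * Polynomial.X ^ (j : ℕ)).coeff m) ∈ I ^ k := by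
    intro m; rw [aux_coeff_sum]; split_ifs; exacts [hq _, zero_mem _]
  have hQd' : ∀ m, ((∑ j : Fin d₂, Polynomial.C (q' j) * Polynomial.X ^ (j : ℕ)).coeff m) ∈ I ^ k := by
    intro m; rw [aux_coeff_sum]; split_ifs; exacts [hq' _, zero_mem _]
  -- coprimality of the images of g and h in the quotient
  have hnil : ∀ x ∈ Ideal.map mk I, IsNilpotent x := by
    intro x hx
    refine ⟨k + 1, ?_⟩
    have hm : x ^ (k + 1) ∈ (Ideal.map mk I) ^ (k + 1) := Ideal.pow_mem_pow hx _
    rw [← Ideal.map_pow, hbot, Ideal.mem_bot] at hm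
    exact hm
  have hle : ∀ r ∈ I ^ (k + 1), ev r = 0 := by
    intro r hr
    exact (hmemI r).mp (Ideal.pow_le_self (by omega) hr)
  set ε : R ⧸ I ^ (k + 1) →+* F := Ideal.Quotient.lift (I ^ (k + 1)) ev hle with hεdef
  have hεmk : ∀ r, ε (mk r) = ev r := fun r => Ideal.Quotient.lift_mk (I ^ (k + 1)) ev hle
  have hker : ∀ x : R ⧸ I ^ (k + 1), ε x = 0 → x ∈ Ideal.map mk I := by
    intro x hx
    obtain ⟨r, rfl⟩ := Ideal.Quotient.mk_surjective x
    exact Ideal.mem_map_of_mem _ ((hmemI r).mpr (by rwa [hεmk] at hx))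
  have hεcompmk : ∀ (w : Polynomial R), (w.map mk).map ε = w.map ev := by
    intro w
    rw [Polynomial.map_map, show ε.comp mk = ev from RingHom.ext hεmk]
  have hGH : IsCoprime (g.map mk) (h.map mk) := by
    obtain ⟨a, b, hab1⟩ := hcop
    set ψ : F →+* R ⧸ I ^ (k + 1) := mk.comp sec with hψdef
    set u : Polynomial (R ⧸ I ^ (k + 1)) := a.map ψ * g.map mk + b.map ψ * h.map mk with hudef
    have hεψ : ∀ (w : Polynomial F), (w.map ψ).map ε = w := by
      intro w
      rw [Polynomial.map_map]
      have : ε.comp ψ = RingHom.id F := RingHom.ext fun c => by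
        simp [hψdef, hεmk, hsec]
      rw [this, Polynomial.map_id]
    have humap : u.map ε = 1 := by
      rw [hudef, Polynomial.map_add, Polynomial.map_mul, Polynomial.map_mul,
        hεψ, hεψ, hεcompmk, hεcompmk, hab1]
    have hcnil : ∀ i : ℕ, i ≠ 0 → IsNilpotent (u.coeff i) := by
      intro i hi
      refine hnil _ (hker _ ?_)
      have : (u.map ε).coeff i = 0 := by
        rw [humap]
        exact Polynomial.coeff_one.trans (by simp [hi])
      rwa [Polynomial.coeff_map] at this
    have hc0 : IsUnit (u.coeff 0) := by
      have h1 : ε (u.coeff 0 - 1) = 0 := by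
        have : (u.map ε).coeff 0 = 1 := by rw [humap]; simp
        rw [Polynomial.coeff_map] at this
        simp [this]
      have : IsNilpotent (u.coeff 0 - 1) := hnil _ (hker _ h1)
      have := this.isUnit_add_one
      simpa using this
    have huu : IsUnit u := Polynomial.isUnit_of_coeff_isUnit_isNilpotent hc0 hcnil
    obtain ⟨v, hv⟩ := huu.exists_left_inv
    exact ⟨v * a.map ψ, v * b.map ψ, by
      rw [mul_assoc, mul_assoc, ← mul_add, ← hudef, hv]⟩
  -- the two lifted solutions agree in the quotient
  have heq1 : ((g' + ∑ i : Fin d₁, Polynomial.C (p i) * Polynomial.X ^ (i : ℕ)) *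
      (h' + ∑ j : Fin d₂, Polynomial.C (q j) * Polynomial.X ^ (j : ℕ))).map mk = f.map mk := by
    have := hzero _ hsol
    rw [Polynomial.map_sub, sub_eq_zero] at this
    exact this
  have heq2 : ((g' + ∑ i : Fin d₁, Polynomial.C (p' i) * Polynomial.X ^ (i : ℕ)) *
      (h' + ∑ j : Fin d₂, Polynomial.C (q' j) * Polynomial.X ^ (j : ℕ))).map mk = f.map mk := by
    have := hzero _ hsol'
    rw [Polynomial.map_sub, sub_eq_zero] at this
    exact this
  have e3 : (g'.map mk + (∑ i : Fin d₁, Polynomial.C (p i) * Polynomial.X ^ (i : ℕ)).map mk) *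
        (h'.map mk + (∑ j : Fin d₂, Polynomial.C (q j) * Polynomial.X ^ (j : ℕ)).map mk) =
      (g'.map mk + (∑ i : Fin d₁, Polynomial.C (p' i) * Polynomial.X ^ (i : ℕ)).map mk) *
        (h'.map mk + (∑ j : Fin d₂, Polynomial.C (q' j) * Polynomial.X ^ (j : ℕ)).map mk) := by
    rw [← Polynomial.map_add, ← Polynomial.map_add, ← Polynomial.map_mul, heq1,
      ← Polynomial.map_add, ← Polynomial.map_add, ← Polynomial.map_mul, heq2]
  -- the products of correction terms vanish
  have hcoeffa : ∀ m, (((g' - g) + ∑ i : Fin d₁, Polynomial.C (p i) * Polynomial.X ^ (i : ℕ)).map mk).coeff m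
      ∈ (I ^ k).map mk := by
    refine hmapK _ fun m => ?_
    rw [Polynomial.coeff_add]
    exact add_mem (hgk m) (hPd m)
  have hcoeffa' : ∀ m, (((g' - g) + ∑ i : Fin d₁, Polynomial.C (p' i) * Polynomial.X ^ (i : ℕ)).map mk).coeff m
      ∈ (I ^ k).map mk := by
    refine hmapK _ fun m => ?_
    rw [Polynomial.coeff_add]
    exact add_mem (hgk m) (hPd' m)
  have hcoeffb : ∀ m, (((h' - h) + ∑ j : Fin d₂, Polynomial.C (q j) * Polynomial.X ^ (j : ℕ)).map mk).coeff m
      ∈ (I ^ k).map mk := by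
    refine hmapK _ fun m => ?_
    rw [Polynomial.coeff_add]
    exact add_mem (hhk m) (hQd m)
  have hcoeffb' : ∀ m, (((h' - h) + ∑ j : Fin d₂, Polynomial.C (q' j) * Polynomial.X ^ (j : ℕ)).map mk).coeff m
      ∈ (I ^ k).map mk := by
    refine hmapK _ fun m => ?_
    rw [Polynomial.coeff_add]
    exact add_mem (hhk m) (hQd' m)
  have hab : (((g' - g) + ∑ i : Fin d₁, Polynomial.C (p i) * Polynomial.X ^ (i : ℕ)).map mk) *
      (((h' - h) + ∑ j : Fin d₂, Polynomial.C (q j) * Polynomial.X ^ (j : ℕ)).map mk) = 0 :=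
    hK _ _ hcoeffa hcoeffb
  have ha'b' : (((g' - g) + ∑ i : Fin d₁, Polynomial.C (p' i) * Polynomial.X ^ (i : ℕ)).map mk) *
      (((h' - h) + ∑ j : Fin d₂, Polynomial.C (q' j) * Polynomial.X ^ (j : ℕ)).map mk) = 0 :=
    hK _ _ hcoeffa' hcoeffb'
  -- key linear relation
  have heqkey : g.map mk *
        ((∑ j : Fin d₂, Polynomial.C (q j) * Polynomial.X ^ (j : ℕ)).map mk -
          (∑ j : Fin d₂, Polynomial.C (q' j) * Polynomial.X ^ (j : ℕ)).map mk) +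
      h.map mk *
        ((∑ i : Fin d₁, Polynomial.C (p i) * Polynomial.X ^ (i : ℕ)).map mk -
          (∑ i : Fin d₁, Polynomial.C (p' i) * Polynomial.X ^ (i : ℕ)).map mk) = 0 := by
    have hsub : ∀ w₁ w₂ : Polynomial R, (w₁ - w₂).map mk = w₁.map mk - w₂.map mk :=
      fun w₁ w₂ => Polynomial.map_sub mk
    have hadd : ∀ w₁ w₂ : Polynomial R, (w₁ + w₂).map mk = w₁.map mk + w₂.map mk :=
      fun w₁ w₂ => Polynomial.map_add mk
    rw [hadd, hadd, hsub, hsub] at hab ha'b'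
    linear_combination e3 + ha'b' - hab
  -- degree bounds for the differences
  have hdiffP : (∑ i : Fin d₁, Polynomial.C (p i) * Polynomial.X ^ (i : ℕ)).map mk -
      (∑ i : Fin d₁, Polynomial.C (p' i) * Polynomial.X ^ (i : ℕ)).map mk =
      (∑ i : Fin d₁, Polynomial.C (p i - p' i) * Polynomial.X ^ (i : ℕ)).map mk := by
    rw [← Polynomial.map_sub]
    congr 1
    rw [← Finset.sum_sub_distrib]
    refine Finset.sum_congr rfl fun i _ => ?_
    rw [map_sub Polynomial.C, sub_mul]
  have hdiffQ : (∑ j : Fin d₂, Polynomial.C (q j) * Polynomial.X ^ (j : ℕ)).map mk -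
      (∑ j : Fin d₂, Polynomial.C (q' j) * Polynomial.X ^ (j : ℕ)).map mk =
      (∑ j : Fin d₂, Polynomial.C (q j - q' j) * Polynomial.X ^ (j : ℕ)).map mk := by
    rw [← Polynomial.map_sub]
    congr 1
    rw [← Finset.sum_sub_distrib]
    refine Finset.sum_congr rfl fun j _ => ?_
    rw [map_sub Polynomial.C, sub_mul]
  have hGmonic : (g.map mk).Monic := hg.map mk
  have hHmonic : (h.map mk).Monic := hh.map mk
  have hGdeg : (g.map mk).natDegree = d₁ := by rw [hg.natDegree_map mk, hgdeg]
  have hHdeg : (h.map mk).natDegree = d₂ := by rw [hh.natDegree_map mk, hhdeg]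
  have hPzero : (∑ i : Fin d₁, Polynomial.C (p i - p' i) * Polynomial.X ^ (i : ℕ)).map mk = 0 := by
    refine aux_key (v := (∑ j : Fin d₂, Polynomial.C (q j - q' j) * Polynomial.X ^ (j : ℕ)).map mk) hGmonic hGH ?_ ?_
    · rw [← hdiffP, ← hdiffQ]; exact heqkey
    · rw [hGdeg]
      calc ((∑ i : Fin d₁, Polynomial.C (p i - p' i) * Polynomial.X ^ (i : ℕ)).map mk).degree
          ≤ (∑ i : Fin d₁, Polynomial.C (p i - p' i) * Polynomial.X ^ (i : ℕ)).degree :=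
            Polynomial.degree_map_le
        _ < ((d₁ : ℕ) : WithBot ℕ) := aux_deg d₁ _ hd₁
  have hQzero : (∑ j : Fin d₂, Polynomial.C (q j - q' j) * Polynomial.X ^ (j : ℕ)).map mk = 0 := by
    refine aux_key (v := (∑ i : Fin d₁, Polynomial.C (p i - p' i) * Polynomial.X ^ (i : ℕ)).map mk) hHmonic hGH.symm ?_ ?_
    · rw [← hdiffP, ← hdiffQ]; linear_combination heqkey
    · rw [hHdeg]
      calc ((∑ j : Fin d₂, Polynomial.C (q j - q' j) * Polynomial.X ^ (j : ℕ)).map mk).degree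
          ≤ (∑ j : Fin d₂, Polynomial.C (q j - q' j) * Polynomial.X ^ (j : ℕ)).degree :=
            Polynomial.degree_map_le
        _ < ((d₂ : ℕ) : WithBot ℕ) := aux_deg d₂ _ hd₂
  constructor
  · intro i
    have hz : mk ((∑ i : Fin d₁, Polynomial.C (p i - p' i) * Polynomial.X ^ (i : ℕ)).coeff i) = 0 := by
      rw [← Polynomial.coeff_map, hPzero, Polynomial.coeff_zero]
    rw [aux_coeff_sum] at hz
    simp only [i.isLt, dif_pos, Fin.eta] at hz
    exact Ideal.Quotient.eq_zero_iff_mem.mp hz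
  · intro j
    have hz : mk ((∑ j : Fin d₂, Polynomial.C (q j - q' j) * Polynomial.X ^ (j : ℕ)).coeff j) = 0 := by
      rw [← Polynomial.coeff_map, hQzero, Polynomial.coeff_zero]
    rw [aux_coeff_sum] at hz
    simp only [j.isLt, dif_pos, Fin.eta] at hz
    exact Ideal.Quotient.eq_zero_iff_mem.mp hz


/-- Uniqueness of the lift in one step of the multivariate Newton iteration: with
`f = g·h`, `g, h` monic of degrees `d₁, d₂ ≥ 1` over `R = F[x₁,…,xₙ]`, reductions
mod `I = ⟨x₁,…,xₙ⟩` coprime, and `g̃, h̃` monic approximations modulo `Iᵏ`, any two tuples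
`(p, q)` and `(p', q')` of elements of `Iᵏ` such that `(g̃ + Σᵢ pᵢ yⁱ)(h̃ + Σⱼ qⱼ yʲ) − f`
and `(g̃ + Σᵢ p′ᵢ yⁱ)(h̃ + Σⱼ q′ⱼ yʲ) − f` have all coefficients in `I^{k+1}`
must agree modulo `I^{k+1}`. -/
theorem stmt_5 {F : Type*} [Field F] [CharZero F] {n : ℕ} (k d₁ d₂ : ℕ)
    (hk : 1 ≤ k) (hd₁ : 1 ≤ d₁) (hd₂ : 1 ≤ d₂)
    (f g h g' h' : Polynomial (MvPolynomial (Fin n) F))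
    (hf : f = g * h)
    (hg : g.Monic) (hgdeg : g.natDegree = d₁)
    (hh : h.Monic) (hhdeg : h.natDegree = d₂)
    (hcop : IsCoprime
      (g.map (MvPolynomial.eval (fun _ : Fin n => (0 : F))))
      (h.map (MvPolynomial.eval (fun _ : Fin n => (0 : F)))))
    (hg' : g'.Monic) (hg'deg : g'.natDegree = d₁)
    (hh' : h'.Monic) (hh'deg : h'.natDegree = d₂)
    (hgk : ∀ i : ℕ, (g' - g).coeff i ∈
      (Ideal.span (Set.range (MvPolynomial.X : Fin n → MvPolynomial (Fin n) F))) ^ k)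
    (hhk : ∀ j : ℕ, (h' - h).coeff j ∈
      (Ideal.span (Set.range (MvPolynomial.X : Fin n → MvPolynomial (Fin n) F))) ^ k)
    (p p' : Fin d₁ → MvPolynomial (Fin n) F) (q q' : Fin d₂ → MvPolynomial (Fin n) F)
    (hp : ∀ i, p i ∈
      (Ideal.span (Set.range (MvPolynomial.X : Fin n → MvPolynomial (Fin n) F))) ^ k)
    (hp' : ∀ i, p' i ∈
      (Ideal.span (Set.range (MvPolynomial.X : Fin n → MvPolynomial (Fin n) F))) ^ k)
    (hq : ∀ j, q j ∈
      (Ideal.span (Set.range (MvPolynomial.X : Fin n → MvPolynomial (Fin n) F))) ^ k)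
    (hq' : ∀ j, q' j ∈
      (Ideal.span (Set.range (MvPolynomial.X : Fin n → MvPolynomial (Fin n) F))) ^ k)
    (hsol : ∀ m : ℕ,
      (((g' + ∑ i : Fin d₁, Polynomial.C (p i) * Polynomial.X ^ (i : ℕ)) *
          (h' + ∑ j : Fin d₂, Polynomial.C (q j) * Polynomial.X ^ (j : ℕ)) - f).coeff m) ∈
        (Ideal.span (Set.range (MvPolynomial.X : Fin n → MvPolynomial (Fin n) F))) ^ (k + 1))
    (hsol' : ∀ m : ℕ,
      (((g' + ∑ i : Fin d₁, Polynomial.C (p' i) * Polynomial.X ^ (i : ℕ)) *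
          (h' + ∑ j : Fin d₂, Polynomial.C (q' j) * Polynomial.X ^ (j : ℕ)) - f).coeff m) ∈
        (Ideal.span (Set.range (MvPolynomial.X : Fin n → MvPolynomial (Fin n) F))) ^ (k + 1)) :
    (∀ i : Fin d₁, p i - p' i ∈
      (Ideal.span (Set.range (MvPolynomial.X : Fin n → MvPolynomial (Fin n) F))) ^ (k + 1)) ∧
    (∀ j : Fin d₂, q j - q' j ∈
      (Ideal.span (Set.range (MvPolynomial.X : Fin n → MvPolynomial (Fin n) F))) ^ (k + 1)) := by
  classical
  have hmemI : ∀ r : MvPolynomial (Fin n) F,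
      r ∈ Ideal.span (Set.range (MvPolynomial.X : Fin n → MvPolynomial (Fin n) F)) ↔
        MvPolynomial.eval (fun _ : Fin n => (0 : F)) r = 0 := by
    intro r
    have hev : MvPolynomial.eval (fun _ : Fin n => (0 : F)) r = r.coeff 0 := by
      rw [MvPolynomial.eval_zero', MvPolynomial.constantCoeff_eq]
    rw [← Set.image_univ, MvPolynomial.mem_ideal_span_X_image, hev]
    constructor
    · intro hmem
      by_contra h0
      obtain ⟨i, -, hi⟩ := hmem 0 (MvPolynomial.mem_support_iff.mpr h0)
      simp at hi
    · intro h0 m hm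
      by_contra hcon
      push_neg at hcon
      have hm0 : m = 0 := by
        ext i
        simpa using hcon i (Set.mem_univ i)
      rw [hm0] at hm
      exact (MvPolynomial.mem_support_iff.mp hm) h0
  exact aux_main _ k d₁ d₂ hk hd₁ hd₂
    (MvPolynomial.eval (fun _ : Fin n => (0 : F))) MvPolynomial.C
    (fun c => MvPolynomial.eval_C c) hmemI f g h g' h'
    hg hgdeg hh hhdeg hcop hgk hhk p p' q q' hp hp' hq hq' hsol hsol'
end

section
/- Let F be a field of characteristic zero, R = F[x₁,…,xₙ], and I ⊆ R the ideal generated by x₁,…,xₙ. Let g₁, g₂ ∈ R[y] be monic of degree d₁ ≥ 1 in y and h₁, h₂ ∈ R[y] be monic of degree d₂ ≥ 1 in y, with g₁·h₁ = g₂·h₂. Assume that the reductions g₁ mod I and h₁ mod I are coprime in F[y], that g₁ mod I = g₂ mod I, and that h₁ mod I = h₂ mod I. Then g₁ = g₂ and h₁ = h₂. -/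
open Polynomial

set_option maxHeartbeats 1000000 in
set_option synthInstance.maxHeartbeats 1000000 in
/-- Uniqueness of coprime monic factorizations with prescribed reduction modulo `⟨x⟩`:
if `g₁·h₁ = g₂·h₂` with `g₁, g₂` monic of degree `d₁ ≥ 1` and `h₁, h₂` monic of degree
`d₂ ≥ 1` in `y` over `R = F[x₁,…,xₙ]`, the reductions of `g₁` and `h₁` at `x = 0` are
coprime in `F[y]`, and `g₁, g₂` (resp. `h₁, h₂`) have the same reduction at `x = 0`,
then `g₁ = g₂` and `h₁ = h₂`. -/
theorem stmt_6 {F : Type*} [Field F] [CharZero F] {n : ℕ} (d₁ d₂ : ℕ)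
    (hd₁ : 1 ≤ d₁) (hd₂ : 1 ≤ d₂)
    (g₁ g₂ h₁ h₂ : Polynomial (MvPolynomial (Fin n) F))
    (hg₁ : g₁.Monic) (hg₁deg : g₁.natDegree = d₁)
    (hg₂ : g₂.Monic) (hg₂deg : g₂.natDegree = d₁)
    (hh₁ : h₁.Monic) (hh₁deg : h₁.natDegree = d₂)
    (hh₂ : h₂.Monic) (hh₂deg : h₂.natDegree = d₂)
    (hmul : g₁ * h₁ = g₂ * h₂)
    (hcop : IsCoprime
      (g₁.map (MvPolynomial.eval (fun _ : Fin n => (0 : F))))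
      (h₁.map (MvPolynomial.eval (fun _ : Fin n => (0 : F)))))
    (hgred : g₁.map (MvPolynomial.eval (fun _ : Fin n => (0 : F)))
      = g₂.map (MvPolynomial.eval (fun _ : Fin n => (0 : F))))
    (hhred : h₁.map (MvPolynomial.eval (fun _ : Fin n => (0 : F)))
      = h₂.map (MvPolynomial.eval (fun _ : Fin n => (0 : F)))) :
    g₁ = g₂ ∧ h₁ = h₂ := by
  classical
  set A := MvPolynomial (Fin n) F
  set K := FractionRing A
  have hinjK : Function.Injective (algebraMap A K) := IsFractionRing.injective A K
  set φ : A[X] →+* K[X] := mapRingHom (algebraMap A K) with hφ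
  have hφinj : Function.Injective φ := Polynomial.map_injective _ hinjK
  set ev : A →+* F := MvPolynomial.eval (fun _ : Fin n => (0 : F)) with hev
  -- Step 1: the images of g₂ and h₁ in K[X] are coprime.
  have hcopK : IsCoprime (φ g₂) (φ h₁) := by
    by_contra hnc
    rw [← EuclideanDomain.gcd_isUnit_iff] at hnc
    set q : K[X] := EuclideanDomain.gcd (φ g₂) (φ h₁) with hq
    have hq0 : q ≠ 0 := by
      intro h0
      exact (hg₂.map (algebraMap A K)).ne_zero (EuclideanDomain.gcd_eq_zero_iff.mp h0).1
    have hdvdg : q ∣ φ g₂ := EuclideanDomain.gcd_dvd_left _ _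
    have hdvdh : q ∣ φ h₁ := EuclideanDomain.gcd_dvd_right _ _
    set p : K[X] := q * C (leadingCoeff q)⁻¹ with hpdef
    have hpu : IsUnit (C (leadingCoeff q)⁻¹ : K[X]) :=
      isUnit_C.mpr (inv_ne_zero (leadingCoeff_ne_zero.mpr hq0)).isUnit
    have hassoc : Associated q p := ⟨hpu.unit, rfl⟩
    have hp : p.Monic := monic_mul_leadingCoeff_inv hq0
    have hpg : p ∣ φ g₂ := hassoc.symm.dvd.trans hdvdg
    have hph : p ∣ φ h₁ := hassoc.symm.dvd.trans hdvdh
    obtain ⟨P, hP⟩ := IsIntegrallyClosed.eq_map_mul_C_of_dvd (R := A) K hg₂ hpg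
    rw [hp.leadingCoeff, map_one, mul_one] at hP
    have hPmonic : P.Monic := monic_of_injective hinjK (by rw [hP]; exact hp)
    have hPg : P ∣ g₂ := by
      rw [← Monic.dvd_iff_fraction_map_dvd_fraction_map (K := K) hg₂ hPmonic, hP]
      exact hpg
    have hPh : P ∣ h₁ := by
      rw [← Monic.dvd_iff_fraction_map_dvd_fraction_map (K := K) hh₁ hPmonic, hP]
      exact hph
    have hdg : P.map ev ∣ g₂.map ev := map_dvd (mapRingHom ev) hPg
    have hdh : P.map ev ∣ h₁.map ev := map_dvd (mapRingHom ev) hPh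
    rw [← hgred] at hdg
    have hu : IsUnit (P.map ev) := hcop.isUnit_of_dvd' hdg hdh
    have h1 : P.map ev = 1 := (hPmonic.map ev).eq_one_of_isUnit hu
    have hPdeg : P.natDegree = 0 := by
      have := hPmonic.natDegree_map ev
      rw [h1, natDegree_one] at this
      exact this.symm
    have hP1 : P = 1 := hPmonic.natDegree_eq_zero.mp hPdeg
    apply hnc
    rw [hassoc.isUnit_iff, ← hP, hP1, Polynomial.map_one]
    exact isUnit_one
  -- Step 2: h₁ = h₂.
  have key : g₂ * (h₂ - h₁) = (g₁ - g₂) * h₁ := by linear_combination -hmul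
  have hdvd : φ h₁ ∣ φ g₂ * φ (h₂ - h₁) := by
    refine ⟨φ (g₁ - g₂), ?_⟩
    rw [← map_mul, ← map_mul, key, mul_comm]
  have hdvd' : φ h₁ ∣ φ (h₂ - h₁) := hcopK.symm.dvd_of_dvd_mul_left hdvd
  have hdeglt : (φ (h₂ - h₁)).degree < (φ h₁).degree := by
    have h1 : (h₂ - h₁).degree < h₁.degree := by
      rcases eq_or_ne h₂ h₁ with he | he
      · rw [he, sub_self, degree_zero]
        exact bot_lt_iff_ne_bot.mpr fun hb => hh₁.ne_zero (degree_eq_bot.mp hb)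
      · have hdeq : h₂.degree = h₁.degree := by
          rw [degree_eq_natDegree hh₂.ne_zero, degree_eq_natDegree hh₁.ne_zero, hh₂deg, hh₁deg]
        have := degree_sub_lt hdeq hh₂.ne_zero (by rw [hh₂.leadingCoeff, hh₁.leadingCoeff])
        rwa [hdeq] at this
    have h2 : (φ (h₂ - h₁)).degree ≤ (h₂ - h₁).degree := by
      simp only [hφ, coe_mapRingHom]
      exact degree_map_le
    have h3 : (φ h₁).degree = h₁.degree := by
      simp only [hφ, coe_mapRingHom]
      exact hh₁.degree_map _
    exact lt_of_le_of_lt h2 (h3 ▸ h1)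
  have hz : φ (h₂ - h₁) = 0 := eq_zero_of_dvd_of_degree_lt hdvd' hdeglt
  have hsub : h₂ - h₁ = 0 := hφinj (by rw [hz, map_zero])
  have hheq : h₁ = h₂ := (sub_eq_zero.mp hsub).symm
  constructor
  · have : g₁ * h₁ = g₂ * h₁ := by rw [hmul, hheq]
    exact mul_right_cancel₀ hh₁.ne_zero this
  · exact hheq
end

section
/- Let F be an infinite field, let f ∈ F[x₁,…,xₙ] be a nonzero polynomial of total degree d, and let y be a new variable. For a = (a₁,…,aₙ) ∈ Fⁿ, let f_a ∈ F[x₁,…,xₙ][y] be the polynomial obtained from f by substituting xᵢ ↦ xᵢ + aᵢ·y for every i. Then for every a ∈ Fⁿ the coefficient of y^d in f_a is the constant H_d(a), where H_d is the degree-d homogeneous component of f; and there exists a ∈ Fⁿ such that this coefficient is a nonzero element of F. -/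
open Polynomial

lemma coeff_prod_aux {R ι : Type*} [CommSemiring R] (s : Finset ι) (g : ι → R[X])
    (e : ι → ℕ) (h : ∀ i ∈ s, (g i).natDegree ≤ e i) :
    (∏ i ∈ s, g i).coeff (∑ i ∈ s, e i) = ∏ i ∈ s, (g i).coeff (e i) := by
  classical
  induction s using Finset.induction_on with
  | empty => simp
  | @insert x s hx ih =>
    rw [Finset.prod_insert hx, Finset.sum_insert hx, Finset.prod_insert hx,
      Polynomial.coeff_mul_add_eq_of_natDegree_le (h x (Finset.mem_insert_self _ _))
        (Polynomial.natDegree_prod_le _ _ |>.trans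
          (Finset.sum_le_sum fun i hi => h i (Finset.mem_insert_of_mem hi))),
      ih fun i hi => h i (Finset.mem_insert_of_mem hi)]

lemma natDegree_aeval_monomial_le {F : Type*} [Field F] {n : ℕ} (a : Fin n → F)
    (m : Fin n →₀ ℕ) (c : F) :
    ((MvPolynomial.aeval (fun i => Polynomial.C (MvPolynomial.X i)
        + Polynomial.C (MvPolynomial.C (a i)) * Polynomial.X)
      (MvPolynomial.monomial m c) : Polynomial (MvPolynomial (Fin n) F)).natDegree
      ≤ m.degree) := by
  rw [MvPolynomial.aeval_monomial]
  refine Polynomial.natDegree_mul_le.trans ?_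
  simp only [Polynomial.algebraMap_apply, Polynomial.natDegree_C, zero_add]
  refine (Polynomial.natDegree_prod_le _ _).trans ?_
  rw [Finsupp.degree]
  refine Finset.sum_le_sum fun i _ => ?_
  refine Polynomial.natDegree_pow_le.trans ?_
  have : (Polynomial.C (MvPolynomial.X i)
      + Polynomial.C (MvPolynomial.C (a i)) * Polynomial.X :
      Polynomial (MvPolynomial (Fin n) F)).natDegree ≤ 1 := by
    refine Polynomial.natDegree_add_le_of_degree_le (by simp) ?_
    exact Polynomial.natDegree_mul_le.trans (by simp)
  calc m i * _ ≤ m i * 1 := Nat.mul_le_mul_left _ this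
    _ = m i := mul_one _

lemma coeff_aeval_eq {F : Type*} [Field F] {n d : ℕ}
    (f : MvPolynomial (Fin n) F) (hd : f.totalDegree ≤ d) (a : Fin n → F) :
    ((MvPolynomial.aeval (fun i => Polynomial.C (MvPolynomial.X i)
          + Polynomial.C (MvPolynomial.C (a i)) * Polynomial.X) f :
        Polynomial (MvPolynomial (Fin n) F)).coeff d)
      = MvPolynomial.C
          (MvPolynomial.eval a (MvPolynomial.homogeneousComponent d f)) := by
  classical
  conv_lhs => rw [f.as_sum]
  conv_rhs => rw [f.as_sum]
  rw [map_sum, Polynomial.finset_sum_coeff, map_sum, map_sum, map_sum]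
  refine Finset.sum_congr rfl fun m hm => ?_
  have hdeg : m.degree = m.sum fun _ e => e := rfl
  have hmd : m.degree ≤ d := by
    rw [hdeg]
    exact le_trans (MvPolynomial.le_totalDegree hm) hd
  rcases eq_or_lt_of_le hmd with heq | hlt
  · -- top degree monomial
    have hhom : MvPolynomial.homogeneousComponent d (MvPolynomial.monomial m (f.coeff m))
        = MvPolynomial.monomial m (f.coeff m) := by
      rw [MvPolynomial.homogeneousComponent_of_mem
        ((MvPolynomial.mem_homogeneousSubmodule _ _).mpr
          (MvPolynomial.isHomogeneous_monomial _ heq)), if_pos rfl]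
    rw [hhom, MvPolynomial.aeval_monomial, Polynomial.algebraMap_apply,
      Polynomial.coeff_C_mul]
    have hprod : (m.prod fun i k => (Polynomial.C (MvPolynomial.X i)
        + Polynomial.C (MvPolynomial.C (a i)) * Polynomial.X :
        Polynomial (MvPolynomial (Fin n) F)) ^ k)
        = ∏ i ∈ m.support, (Polynomial.C (MvPolynomial.X i)
          + Polynomial.C (MvPolynomial.C (a i)) * Polynomial.X) ^ m i := rfl
    have hg1 : ∀ i : Fin n, (Polynomial.C (MvPolynomial.X i)
        + Polynomial.C (MvPolynomial.C (a i)) * Polynomial.X :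
        Polynomial (MvPolynomial (Fin n) F)).natDegree ≤ 1 := by
      intro i
      refine Polynomial.natDegree_add_le_of_degree_le (by simp) ?_
      exact Polynomial.natDegree_mul_le.trans (by simp)
    have hd' : d = ∑ i ∈ m.support, m i := by rw [← heq]; rfl
    rw [hprod, hd', coeff_prod_aux _ _ _ (fun i _ =>
      Polynomial.natDegree_pow_le.trans (by
        calc m i * _ ≤ m i * 1 := Nat.mul_le_mul_left _ (hg1 i)
          _ = m i := mul_one _))]
    have hcoeff : ∀ i : Fin n, ((Polynomial.C (MvPolynomial.X i)
        + Polynomial.C (MvPolynomial.C (a i)) * Polynomial.X :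
        Polynomial (MvPolynomial (Fin n) F)) ^ m i).coeff (m i)
        = MvPolynomial.C (a i) ^ m i := by
      intro i
      have := Polynomial.coeff_pow_of_natDegree_le (m := m i) (hg1 i)
      rw [mul_one] at this
      rw [this]
      congr 1
      simp
    simp only [hcoeff]
    rw [MvPolynomial.eval_monomial, map_mul]
    congr 1
    rw [Finsupp.prod, map_prod]
    exact Finset.prod_congr rfl fun i _ => by rw [map_pow]
  · have h0 : MvPolynomial.homogeneousComponent d (MvPolynomial.monomial m (f.coeff m)) = 0 := by
      apply MvPolynomial.homogeneousComponent_eq_zero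
      calc (MvPolynomial.monomial m (f.coeff m)).totalDegree ≤ m.degree :=
            hdeg ▸ MvPolynomial.totalDegree_monomial_le m _
        _ < d := hlt
    rw [h0, map_zero, map_zero,
      Polynomial.coeff_eq_zero_of_natDegree_lt
        (lt_of_le_of_lt (natDegree_aeval_monomial_le a m _) hlt)]

/-- Making a polynomial monic in a new variable: for `f ∈ F[x₁,…,xₙ]` nonzero of total
degree `d` over an infinite field `F`, and `f_a` obtained from `f` by substituting
`xᵢ ↦ xᵢ + aᵢ·y`, the coefficient of `y^d` in `f_a` is the constant `H_d(a)` where `H_d`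
is the degree-`d` homogeneous component of `f`; and there exists `a ∈ Fⁿ` for which this
coefficient is nonzero. -/
theorem stmt_9 {F : Type*} [Field F] [Infinite F] {n d : ℕ}
    (f : MvPolynomial (Fin n) F) (hf : f ≠ 0) (hd : f.totalDegree = d) :
    (∀ a : Fin n → F,
      ((MvPolynomial.aeval (fun i => Polynomial.C (MvPolynomial.X i)
            + Polynomial.C (MvPolynomial.C (a i)) * Polynomial.X) f :
          Polynomial (MvPolynomial (Fin n) F)).coeff d)
        = MvPolynomial.C
            (MvPolynomial.eval a (MvPolynomial.homogeneousComponent d f))) ∧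
    (∃ a : Fin n → F,
      ((MvPolynomial.aeval (fun i => Polynomial.C (MvPolynomial.X i)
            + Polynomial.C (MvPolynomial.C (a i)) * Polynomial.X) f :
          Polynomial (MvPolynomial (Fin n) F)).coeff d) ≠ 0) := by
  have key := fun a => coeff_aeval_eq f hd.le a
  refine ⟨key, ?_⟩
  have hcomp : MvPolynomial.homogeneousComponent d f ≠ 0 := by
    obtain ⟨m, hm, hmsum⟩ : ∃ m ∈ f.support, (m.sum fun _ e => e) = d := by
      have hne : f.support.Nonempty := MvPolynomial.support_nonempty.mpr hf
      obtain ⟨m, hm, hsup⟩ := Finset.exists_mem_eq_sup f.support hne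
        (fun m => m.sum fun _ e => e)
      exact ⟨m, hm, by rw [← hd, MvPolynomial.totalDegree, hsup]⟩
    intro h0
    have := MvPolynomial.coeff_homogeneousComponent (R := F) d f m
    rw [h0] at this
    simp only [MvPolynomial.coeff_zero] at this
    rw [if_pos (show m.degree = d from hmsum ▸ rfl)] at this
    exact MvPolynomial.mem_support_iff.mp hm this.symm
  obtain ⟨a, ha⟩ : ∃ a : Fin n → F,
      MvPolynomial.eval a (MvPolynomial.homogeneousComponent d f) ≠ 0 := by
    by_contra h
    push_neg at h
    exact hcomp (MvPolynomial.funext fun x => by simp [h x])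
  exact ⟨a, by rw [key a]; simpa using ha⟩
end
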